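/- arXiv:1108.2754 — 5 statements merged into one kernel-verified Lean document; each statement's English description precedes it below -/
import Mathlib

section
/- Let U be a nonempty finite ground set and let f : Finset U → ℝ be a normalized, monotone, submodular set function. Let k ≥ 1 and let S_0 = ∅, S_1, ..., S_k be a (1 − 1/e)-approximate greedy sequence for f, i.e., for each i < k there is an element u_{i+1} with S_{i+1} = S_{i} ∪ {u_{i+1}} and f(S_{i+1}) − f(S_i) ≥ (1 − 1/e) · max_{u ∈ U} (f(S_i ∪ {u}) − f(S_i)). Then for every set OPT ⊆ U with |OPT| ≤ k, f(S_k) ≥ (1 − e^{−(1 − 1/e)}) · f(OPT). -/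
/-- Submodularity bound: the marginal gain of a set is at most the sum of
individual marginal gains. -/
lemma marg_sum_aux {U : Type*} [Fintype U] [DecidableEq U]
    (f : Finset U → ℝ)
    (hsub : ∀ X Y : Finset U, X ⊆ Y → ∀ u : U,
      f (insert u X) - f X ≥ f (insert u Y) - f Y)
    (T X : Finset U) :
    f (X ∪ T) - f X ≤ ∑ u ∈ T, (f (insert u X) - f X) := by
  induction T using Finset.induction_on with
  | empty => simp
  | @insert a T' ha ih =>
    rw [Finset.sum_insert ha]
    have h1 : X ∪ insert a T' = insert a (X ∪ T') := by
      ext x; simp [or_comm, or_left_comm]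
    rw [h1]
    have h2 := hsub X (X ∪ T') Finset.subset_union_left a
    linarith

/-- A (1 - 1/e)-approximate greedy sequence for a normalized, monotone,
submodular set function achieves a (1 - e^{-(1 - 1/e)}) approximation to the optimum
over sets of size at most k. -/
theorem greedy_one_sub_inv_e_approx
    {U : Type*} [Fintype U] [DecidableEq U] [Nonempty U]
    (f : Finset U → ℝ)
    (hnorm : f ∅ = 0)
    (hmono : ∀ X Y : Finset U, X ⊆ Y → f X ≤ f Y)
    (hsub : ∀ X Y : Finset U, X ⊆ Y → ∀ u : U,
      f (insert u X) - f X ≥ f (insert u Y) - f Y)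
    (k : ℕ) (hk : 1 ≤ k)
    (S : ℕ → Finset U)
    (hS0 : S 0 = ∅)
    (hgreedy : ∀ i < k, ∃ u : U, S (i + 1) = insert u (S i) ∧
      f (S (i + 1)) - f (S i) ≥
        (1 - 1 / Real.exp 1) *
          Finset.univ.sup' Finset.univ_nonempty
            (fun u' : U => f (insert u' (S i)) - f (S i)))
    (OPT : Finset U) (hOPT : OPT.card ≤ k) :
    f (S k) ≥ (1 - Real.exp (-(1 - 1 / Real.exp 1))) * f OPT := by
  set β : ℝ := 1 - 1 / Real.exp 1 with hβ
  have he1 : (1 : ℝ) < Real.exp 1 := by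
    have := Real.add_one_le_exp (1 : ℝ); linarith
  have hβpos : 0 < β := by
    have : 1 / Real.exp 1 < 1 := by
      rw [div_lt_one (by positivity)]; exact he1
    simp only [hβ]; linarith
  have hβle1 : β ≤ 1 := by
    have : 0 < 1 / Real.exp 1 := by positivity
    simp only [hβ]; linarith
  have hkpos : (0 : ℝ) < (k : ℝ) := by exact_mod_cast hk
  have hratio : 0 ≤ 1 - β / k := by
    have : β / k ≤ 1 := by
      rw [div_le_one hkpos]
      calc β ≤ 1 := hβle1
        _ ≤ (k : ℝ) := by exact_mod_cast hk
    linarith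
  have hfOPT : 0 ≤ f OPT := by
    have := hmono ∅ OPT (Finset.empty_subset _)
    linarith [hnorm ▸ this]
  -- main induction
  have key : ∀ i ≤ k, f OPT - f (S i) ≤ (1 - β / k) ^ i * f OPT := by
    intro i hi
    induction i with
    | zero => simp [hS0, hnorm]
    | succ n ih =>
      have hn : n < k := Nat.lt_of_succ_le hi
      have ihn := ih (le_of_lt hn)
      obtain ⟨u, _, hgain⟩ := hgreedy n hn
      set M : ℝ := Finset.univ.sup' Finset.univ_nonempty
        (fun u' : U => f (insert u' (S n)) - f (S n)) with hM
      have hMnonneg : 0 ≤ M := by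
        obtain ⟨u0⟩ := ‹Nonempty U›
        have h1 : f (insert u0 (S n)) - f (S n) ≤ M :=
          Finset.le_sup' (fun u' : U => f (insert u' (S n)) - f (S n)) (Finset.mem_univ u0)
        have h2 : f (S n) ≤ f (insert u0 (S n)) :=
          hmono _ _ (Finset.subset_insert _ _)
        linarith
      -- f OPT - f (S n) ≤ k * M
      have hbound : f OPT - f (S n) ≤ (k : ℝ) * M := by
        have h1 : f OPT ≤ f (S n ∪ OPT) :=
          hmono _ _ Finset.subset_union_right
        have h2 := marg_sum_aux f hsub OPT (S n)
        have h3 : ∑ u' ∈ OPT, (f (insert u' (S n)) - f (S n)) ≤ OPT.card • M := by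
          apply Finset.sum_le_card_nsmul
          intro x _
          exact Finset.le_sup' (fun u' : U => f (insert u' (S n)) - f (S n)) (Finset.mem_univ x)
        have h4 : (OPT.card : ℝ) * M ≤ (k : ℝ) * M := by
          apply mul_le_mul_of_nonneg_right _ hMnonneg
          exact_mod_cast hOPT
        rw [nsmul_eq_mul] at h3
        linarith
      have hstep : f (S (n + 1)) - f (S n) ≥ β / k * (f OPT - f (S n)) := by
        have h5 : β / k * (f OPT - f (S n)) ≤ β * M := by
          have : β / k * (f OPT - f (S n)) ≤ β / k * ((k : ℝ) * M) := by
            apply mul_le_mul_of_nonneg_left hbound (by positivity)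
          calc β / k * (f OPT - f (S n)) ≤ β / k * ((k : ℝ) * M) := this
            _ = β * M := by field_simp
        exact le_trans h5 hgain
      have : f OPT - f (S (n + 1)) ≤ (1 - β / k) * (f OPT - f (S n)) := by
        nlinarith
      calc f OPT - f (S (n + 1)) ≤ (1 - β / k) * (f OPT - f (S n)) := this
        _ ≤ (1 - β / k) * ((1 - β / k) ^ n * f OPT) := by
            apply mul_le_mul_of_nonneg_left ihn hratio
        _ = (1 - β / k) ^ (n + 1) * f OPT := by ring
  have hfinal := key k le_rfl
  -- (1 - β/k)^k ≤ exp (-β)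
  have hexp : (1 - β / k) ^ k ≤ Real.exp (-β) := by
    have h1 : 1 - β / k ≤ Real.exp (-(β / k)) := by
      have := Real.add_one_le_exp (-(β / k)); linarith
    calc (1 - β / k) ^ k ≤ (Real.exp (-(β / k))) ^ k :=
          pow_le_pow_left₀ hratio h1 k
      _ = Real.exp ((k : ℝ) * (-(β / k))) := by
          rw [← Real.exp_nat_mul]
      _ = Real.exp (-β) := by
          congr 1
          field_simp
  have : (1 - β / k) ^ k * f OPT ≤ Real.exp (-β) * f OPT :=
    mul_le_mul_of_nonneg_right hexp hfOPT
  linarith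
end

section
/- Let U be a nonempty finite ground set, let f : Finset U → ℝ be a normalized, monotone, submodular set function, let 0 < β ≤ 1, let k ≥ 1, and let S_0 = ∅, S_1, ..., S_k be a β-approximate greedy sequence for f. Then for every set OPT ⊆ U with |OPT| ≤ k, f(S_k) ≥ (1 − e^{−β}) · f(OPT). -/
lemma greedy_marg_sum {U : Type*} [Fintype U] [DecidableEq U]
    (f : Finset U → ℝ)
    (hsub : ∀ X Y : Finset U, X ⊆ Y → ∀ u : U,
      f (insert u X) - f X ≥ f (insert u Y) - f Y)
    (S : Finset U) :
    ∀ T : Finset U, f (S ∪ T) - f S ≤ ∑ u ∈ T, (f (insert u S) - f S) := by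
  intro T
  induction T using Finset.induction_on with
  | empty => simp
  | @insert a T ha ih =>
    rw [Finset.sum_insert ha, Finset.union_insert]
    have h1 := hsub S (S ∪ T) Finset.subset_union_left a
    linarith

/-- A β-approximate greedy sequence for a normalized, monotone,
submodular set function achieves a (1 - e^{-β}) approximation to the optimum
over sets of size at most k. -/
theorem greedy_beta_approx
    {U : Type*} [Fintype U] [DecidableEq U] [Nonempty U]
    (f : Finset U → ℝ)
    (hnorm : f ∅ = 0)
    (hmono : ∀ X Y : Finset U, X ⊆ Y → f X ≤ f Y)
    (hsub : ∀ X Y : Finset U, X ⊆ Y → ∀ u : U,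
      f (insert u X) - f X ≥ f (insert u Y) - f Y)
    (β : ℝ) (hβ0 : 0 < β) (hβ1 : β ≤ 1)
    (k : ℕ) (hk : 1 ≤ k)
    (S : ℕ → Finset U)
    (hS0 : S 0 = ∅)
    (hgreedy : ∀ i < k, ∃ u : U, S (i + 1) = insert u (S i) ∧
      f (S (i + 1)) - f (S i) ≥
        β * Finset.univ.sup' Finset.univ_nonempty
          (fun u' : U => f (insert u' (S i)) - f (S i)))
    (OPT : Finset U) (hOPT : OPT.card ≤ k) :
    f (S k) ≥ (1 - Real.exp (-β)) * f OPT := by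
  have hkpos : (0:ℝ) < k := by exact_mod_cast Nat.lt_of_lt_of_le Nat.zero_lt_one hk
  have hOPT0 : 0 ≤ f OPT := hnorm ▸ hmono ∅ OPT (Finset.empty_subset _)
  set M : ℕ → ℝ := fun i => Finset.univ.sup' Finset.univ_nonempty
    (fun u' : U => f (insert u' (S i)) - f (S i)) with hM
  have hMnonneg : ∀ i, 0 ≤ M i := by
    intro i
    obtain ⟨u⟩ := ‹Nonempty U›
    have h1 := Finset.le_sup' (fun u' : U => f (insert u' (S i)) - f (S i)) (Finset.mem_univ u)
    have h2 : f (S i) ≤ f (insert u (S i)) := hmono _ _ (Finset.subset_insert _ _)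
    simp only [hM]
    linarith
  -- key: f OPT - f (S i) ≤ k * M i
  have key : ∀ i, f OPT - f (S i) ≤ k * M i := by
    intro i
    have h1 : f OPT ≤ f (S i ∪ OPT) := hmono _ _ Finset.subset_union_right
    have h2 := greedy_marg_sum f hsub (S i) OPT
    have h3 : ∑ u ∈ OPT, (f (insert u (S i)) - f (S i)) ≤ (OPT.card : ℝ) * M i := by
      have := Finset.sum_le_card_nsmul OPT (fun u => f (insert u (S i)) - f (S i)) (M i)
        (fun u _ => Finset.le_sup' (fun u' : U => f (insert u' (S i)) - f (S i)) (Finset.mem_univ u))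
      simpa [nsmul_eq_mul] using this
    have h4 : (OPT.card : ℝ) * M i ≤ k * M i :=
      mul_le_mul_of_nonneg_right (by exact_mod_cast hOPT) (hMnonneg i)
    linarith
  have hfrac : (0:ℝ) ≤ 1 - β / k := by
    have : β / k ≤ 1 := by
      rw [div_le_one hkpos]
      exact hβ1.trans (by exact_mod_cast hk)
    linarith
  have main : ∀ i ≤ k, f OPT - f (S i) ≤ (1 - β / k) ^ i * f OPT := by
    intro i
    induction i with
    | zero => intro _; simp [hS0, hnorm]
    | succ i ih =>
      intro hik
      have hik' : i < k := hik
      obtain ⟨u, _, hg⟩ := hgreedy i hik'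
      have hki := key i
      have hgain : f (S (i+1)) - f (S i) ≥ (β / k) * (f OPT - f (S i)) := by
        have hMi : β / k * (f OPT - f (S i)) ≤ β * M i := by
          rw [div_mul_eq_mul_div, mul_comm β (M i)] at *
          rw [div_le_iff₀ hkpos] at *
          calc β * (f OPT - f (S i)) ≤ β * (k * M i) := by
                exact mul_le_mul_of_nonneg_left hki hβ0.le
            _ = M i * β * k := by ring
        linarith
      have step : f OPT - f (S (i+1)) ≤ (1 - β / k) * (f OPT - f (S i)) := by
        have := hgain
        nlinarith
      calc f OPT - f (S (i+1)) ≤ (1 - β / k) * (f OPT - f (S i)) := step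
        _ ≤ (1 - β / k) * ((1 - β / k) ^ i * f OPT) :=
            mul_le_mul_of_nonneg_left (ih (Nat.le_of_lt hik')) hfrac
        _ = (1 - β / k) ^ (i+1) * f OPT := by ring
  have hexp : (1 - β / k) ^ k ≤ Real.exp (-β) := by
    have h1 : 1 - β / k ≤ Real.exp (-(β / k)) := by
      have := Real.add_one_le_exp (-(β / k))
      linarith
    calc (1 - β / k) ^ k ≤ (Real.exp (-(β / k))) ^ k :=
          pow_le_pow_left₀ hfrac h1 k
      _ = Real.exp (-β) := by
          rw [← Real.exp_nat_mul]
          congr 1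
          field_simp
  have := main k le_rfl
  have h2 : (1 - β / k) ^ k * f OPT ≤ Real.exp (-β) * f OPT :=
    mul_le_mul_of_nonneg_right hexp hOPT0
  linarith
end

section
/- Let U be a nonempty finite ground set and let f : Finset U → ℝ be a monotone, submodular set function. Then for all finite sets S, T ⊆ U with |T| ≤ k, f(S ∪ T) ≤ f(S) + k · max_{u ∈ U} ( f(S ∪ {u}) − f(S) ). -/
/-- For a monotone submodular set function and |T| ≤ k,
f(S ∪ T) ≤ f(S) + k · max_{u ∈ U} (f(S ∪ {u}) − f(S)). -/
theorem submodular_union_le_card_mul_best_marginal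
    {U : Type*} [Fintype U] [DecidableEq U] [Nonempty U]
    (f : Finset U → ℝ)
    (hmono : ∀ X Y : Finset U, X ⊆ Y → f X ≤ f Y)
    (hsub : ∀ X Y : Finset U, X ⊆ Y → ∀ u : U,
      f (insert u X) - f X ≥ f (insert u Y) - f Y)
    (k : ℕ) (S T : Finset U) (hT : T.card ≤ k) :
    f (S ∪ T) ≤ f S + (k : ℝ) *
      Finset.univ.sup' Finset.univ_nonempty
        (fun u : U => f (insert u S) - f S) := by
  set M := Finset.univ.sup' Finset.univ_nonempty
      (fun u : U => f (insert u S) - f S) with hM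
  have hM0 : 0 ≤ M := by
    obtain ⟨u⟩ := ‹Nonempty U›
    have h1 : f (insert u S) - f S ≤ M :=
      Finset.le_sup' (fun u : U => f (insert u S) - f S) (Finset.mem_univ u)
    have h2 : f S ≤ f (insert u S) := hmono _ _ (Finset.subset_insert u S)
    linarith
  have key : ∀ T : Finset U, f (S ∪ T) ≤ f S + (T.card : ℝ) * M := by
    intro T
    induction T using Finset.induction_on with
    | empty => simp
    | @insert a T' ha ih =>
      have hsubset : S ⊆ S ∪ T' := Finset.subset_union_left
      have h1 : f (insert a (S ∪ T')) - f (S ∪ T') ≤ f (insert a S) - f S := by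
        have := hsub S (S ∪ T') hsubset a
        linarith
      have h2 : f (insert a S) - f S ≤ M :=
        Finset.le_sup' (fun u : U => f (insert u S) - f S) (Finset.mem_univ a)
      have hcard : ((insert a T').card : ℝ) = (T'.card : ℝ) + 1 := by
        rw [Finset.card_insert_of_notMem ha]; push_cast; ring
      have : S ∪ insert a T' = insert a (S ∪ T') := by
        ext x; simp [or_comm, or_assoc, or_left_comm]
      rw [this, hcard]
      linarith
  have := key T
  have : f (S ∪ T) ≤ f S + (T.card : ℝ) * M := this
  have hk : (T.card : ℝ) ≤ (k : ℝ) := by exact_mod_cast hT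
  nlinarith
end

section
/- Let U be a nonempty finite ground set, let f : Finset U → ℝ be a monotone, submodular set function, let 0 < β ≤ 1 and k ≥ 1. Let S ⊆ U be a finite set and let u* ∈ U be an element satisfying f(S ∪ {u*}) − f(S) ≥ β · max_{u ∈ U} ( f(S ∪ {u}) − f(S) ). Then for every set OPT ⊆ U with |OPT| ≤ k, f(S ∪ {u*}) ≥ (1 − β/k) · f(S) + (β/k) · f(OPT). -/
lemma union_marginal_bound
    {U : Type*} [Fintype U] [DecidableEq U]
    (f : Finset U → ℝ)
    (hsub : ∀ X Y : Finset U, X ⊆ Y → ∀ u : U,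
      f (insert u X) - f X ≥ f (insert u Y) - f Y)
    (S : Finset U) (T : Finset U) :
    f (S ∪ T) ≤ f S + ∑ u ∈ T, (f (insert u S) - f S) := by
  induction T using Finset.induction_on with
  | empty => simp
  | @insert a T hx ih =>
    have h1 : f (insert a (S ∪ T)) - f (S ∪ T) ≤ f (insert a S) - f S :=
      hsub S (S ∪ T) Finset.subset_union_left a
    rw [Finset.union_insert] at *
    rw [Finset.sum_insert hx]
    linarith

/-- A single β-approximate greedy step closes at least a β/k fraction
of the gap to the optimal value: f(S ∪ {u*}) ≥ (1 − β/k)·f(S) + (β/k)·f(OPT). -/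
theorem greedy_step_gap_bound
    {U : Type*} [Fintype U] [DecidableEq U] [Nonempty U]
    (f : Finset U → ℝ)
    (hmono : ∀ X Y : Finset U, X ⊆ Y → f X ≤ f Y)
    (hsub : ∀ X Y : Finset U, X ⊆ Y → ∀ u : U,
      f (insert u X) - f X ≥ f (insert u Y) - f Y)
    (β : ℝ) (hβ0 : 0 < β) (hβ1 : β ≤ 1)
    (k : ℕ) (hk : 1 ≤ k)
    (S : Finset U) (ustar : U)
    (hstep : f (insert ustar S) - f S ≥
      β * Finset.univ.sup' Finset.univ_nonempty
        (fun u : U => f (insert u S) - f S))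
    (OPT : Finset U) (hOPT : OPT.card ≤ k) :
    f (insert ustar S) ≥ (1 - β / k) * f S + (β / k) * f OPT := by
  classical
  set M := Finset.univ.sup' Finset.univ_nonempty (fun u : U => f (insert u S) - f S) with hM
  have hMnn : 0 ≤ M := by
    obtain ⟨u⟩ := ‹Nonempty U›
    have : f (insert u S) - f S ≤ M :=
      Finset.le_sup' (fun u : U => f (insert u S) - f S) (Finset.mem_univ u)
    have h0 : f S ≤ f (insert u S) := hmono S (insert u S) (Finset.subset_insert u S)
    linarith
  have hsum : f (S ∪ OPT) ≤ f S + ∑ u ∈ OPT, (f (insert u S) - f S) :=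
    union_marginal_bound f hsub S OPT
  have hsumM : ∑ u ∈ OPT, (f (insert u S) - f S) ≤ (OPT.card : ℝ) * M := by
    calc ∑ u ∈ OPT, (f (insert u S) - f S) ≤ ∑ _u ∈ OPT, M := by
          apply Finset.sum_le_sum
          intro u _
          exact Finset.le_sup' (fun u : U => f (insert u S) - f S) (Finset.mem_univ u)
      _ = (OPT.card : ℝ) * M := by simp [mul_comm]
  have hcard : (OPT.card : ℝ) ≤ (k : ℝ) := by exact_mod_cast hOPT
  have hOPTle : f OPT ≤ f S + (k : ℝ) * M := by
    have h1 : f OPT ≤ f (S ∪ OPT) := hmono _ _ Finset.subset_union_right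
    have h2 : (OPT.card : ℝ) * M ≤ (k : ℝ) * M := by
      exact mul_le_mul_of_nonneg_right hcard hMnn
    linarith
  have hkpos : (0 : ℝ) < k := by exact_mod_cast hk
  have hβk : 0 < β / k := div_pos hβ0 hkpos
  have key : (β / k) * (f OPT - f S) ≤ β * M := by
    have h : f OPT - f S ≤ (k : ℝ) * M := by linarith
    have := mul_le_mul_of_nonneg_left h (le_of_lt hβk)
    calc (β / k) * (f OPT - f S) ≤ (β / k) * ((k : ℝ) * M) := this
      _ = β * M := by field_simp
  nlinarith [hstep]
end

section
/- Let U be a nonempty finite ground set, let f : Finset U → ℝ be a normalized, monotone, submodular set function, let 0 < β ≤ 1, let k ≥ 1, and let S_0 = ∅, S_1, S_2, ... be a β-approximate greedy sequence for f. Then for every set OPT ⊆ U with |OPT| ≤ k and every i ≥ 0, f(S_i) ≥ (1 − (1 − β/k)^i) · f(OPT). -/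
/-!
Let `M` be the largest marginal gain at `S i`. By monotonicity and submodularity the gap
`f OPT - f (S i)` is at most the sum of the marginal gains of the elements of `OPT`, hence at most
`k * M`, while the greedy step gains at least `β * M`. So each step shrinks the gap by a factor
`1 - β / k`, and the gap starts at `f OPT` since `f ∅ = 0`.
-/

open Finset

section SetFunction

variable {U : Type*} [DecidableEq U] {f : Finset U → ℝ}

theorem sub_le_sum_marginal_of_submodular
    (hsub : ∀ X Y : Finset U, X ⊆ Y → ∀ u : U, f (insert u X) - f X ≥ f (insert u Y) - f Y)
    (T A : Finset U) : f (T ∪ A) - f T ≤ ∑ u ∈ A, (f (insert u T) - f T) := by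
  induction A using Finset.induction_on with
  | empty => simp
  | insert a A ha ih =>
    have hdiminish := hsub T (T ∪ A) subset_union_left a
    rw [sum_insert ha, union_insert]
    linarith

theorem sub_le_card_mul_of_marginal_le
    (hmono : ∀ X Y : Finset U, X ⊆ Y → f X ≤ f Y)
    (hsub : ∀ X Y : Finset U, X ⊆ Y → ∀ u : U, f (insert u X) - f X ≥ f (insert u Y) - f Y)
    {T A : Finset U} {M : ℝ} (hM : ∀ u ∈ A, f (insert u T) - f T ≤ M) :
    f A - f T ≤ A.card * M := by
  calc f A - f T ≤ f (T ∪ A) - f T := by gcongr; exact hmono _ _ subset_union_right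
    _ ≤ ∑ u ∈ A, (f (insert u T) - f T) := sub_le_sum_marginal_of_submodular hsub T A
    _ ≤ A.card • M := sum_le_card_nsmul A _ M hM
    _ = A.card * M := nsmul_eq_mul _ _

theorem sub_le_mul_sub_of_approx_greedy_step [Fintype U] [Nonempty U]
    (hmono : ∀ X Y : Finset U, X ⊆ Y → f X ≤ f Y)
    (hsub : ∀ X Y : Finset U, X ⊆ Y → ∀ u : U, f (insert u X) - f X ≥ f (insert u Y) - f Y)
    {β : ℝ} (hβ : 0 ≤ β) {k : ℕ} (hk : 1 ≤ k) {T T' A : Finset U} (hA : A.card ≤ k)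
    (hgain : f T' - f T ≥ β * univ.sup' univ_nonempty (fun u => f (insert u T) - f T)) :
    f A - f T' ≤ (1 - β / k) * (f A - f T) := by
  set M := univ.sup' univ_nonempty (fun u => f (insert u T) - f T)
  have hle_M (u : U) : f (insert u T) - f T ≤ M := le_sup' (fun u => f (insert u T) - f T) (mem_univ u)
  have hM : 0 ≤ M := by
    obtain ⟨u⟩ := ‹Nonempty U›
    linarith [hle_M u, hmono T _ (subset_insert u T)]
  have hk' : (0 : ℝ) < k := by exact_mod_cast hk
  have hgap : f A - f T ≤ k * M :=
    (sub_le_card_mul_of_marginal_le hmono hsub fun u _ => hle_M u).trans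
      (mul_le_mul_of_nonneg_right (by exact_mod_cast hA) hM)
  have hshrink : β / k * (f A - f T) ≤ β * M :=
    calc β / k * (f A - f T) ≤ β / k * (k * M) := by gcongr
      _ = β * M := by field_simp
  linarith

end SetFunction

theorem one_sub_pow_mul_le_of_gap_contracts {x : ℕ → ℝ} {c ρ : ℝ} (hρ : 0 ≤ ρ) (hx0 : 0 ≤ x 0)
    (hstep : ∀ i, c - x (i + 1) ≤ ρ * (c - x i)) (i : ℕ) : (1 - ρ ^ i) * c ≤ x i := by
  have hgap : ∀ i, c - x i ≤ ρ ^ i * (c - x 0) := by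
    intro i
    induction i with
    | zero => simp
    | succ i ih =>
      calc c - x (i + 1) ≤ ρ * (c - x i) := hstep i
        _ ≤ ρ * (ρ ^ i * (c - x 0)) := by gcongr
        _ = ρ ^ (i + 1) * (c - x 0) := by ring
  have : ρ ^ i * (c - x 0) ≤ ρ ^ i * c := by gcongr; linarith
  linarith [hgap i]

/-- Induction claim in the proof of Lemma 1: a β-approximate greedy
sequence satisfies f(S_i) ≥ (1 − (1 − β/k)^i)·f(OPT) for every i, whenever
|OPT| ≤ k. -/
theorem greedy_induction_bound
    {U : Type*} [Fintype U] [DecidableEq U] [Nonempty U]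
    (f : Finset U → ℝ)
    (hnorm : f ∅ = 0)
    (hmono : ∀ X Y : Finset U, X ⊆ Y → f X ≤ f Y)
    (hsub : ∀ X Y : Finset U, X ⊆ Y → ∀ u : U,
      f (insert u X) - f X ≥ f (insert u Y) - f Y)
    (β : ℝ) (hβ0 : 0 < β) (hβ1 : β ≤ 1)
    (k : ℕ) (hk : 1 ≤ k)
    (S : ℕ → Finset U)
    (hS0 : S 0 = ∅)
    (hgreedy : ∀ i : ℕ, ∃ u : U, S (i + 1) = insert u (S i) ∧
      f (S (i + 1)) - f (S i) ≥
        β * Finset.univ.sup' Finset.univ_nonempty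
          (fun u' : U => f (insert u' (S i)) - f (S i)))
    (OPT : Finset U) (hOPT : OPT.card ≤ k) :
    ∀ i : ℕ, f (S i) ≥ (1 - (1 - β / k) ^ i) * f OPT := by
  have hρ : 0 ≤ 1 - β / k := by
    have : β / k ≤ 1 := div_le_one_of_le₀ (hβ1.trans (by exact_mod_cast hk)) (Nat.cast_nonneg k)
    linarith
  refine one_sub_pow_mul_le_of_gap_contracts hρ (by rw [hS0, hnorm]) fun i => ?_
  obtain ⟨-, -, hgain⟩ := hgreedy i
  exact sub_le_mul_sub_of_approx_greedy_step hmono hsub hβ0.le hk hOPT hgain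
end
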